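/- arXiv:2411.00127 — 3 statements merged into one kernel-verified Lean document; each statement's English description precedes it below -/
import Mathlib

section
/- Let Λ : ℍ → ℍ be a nonzero ℝ-linear map and g ∈ 𝕊. Then Q_Λ(g) ≤ ‖Λ‖⁴; moreover Q_Λ(g) = ‖Λ‖⁴ holds if and only if there exists h ∈ 𝕊 such that Λ is complex linear of type (g,h). Furthermore, if Λ is complex linear of type (g,h) for some h ∈ 𝕊, then L_Λ(g) = ‖Λ‖²·h; in particular such an h is unique. -/
noncomputable section

open Quaternion Classical

/-- The imaginary unit `i`. -/
def qi : ℍ[ℝ] := ⟨0, 1, 0, 0⟩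
/-- The imaginary unit `j`. -/
def qj : ℍ[ℝ] := ⟨0, 0, 1, 0⟩
/-- The imaginary unit `k`. -/
def qk : ℍ[ℝ] := ⟨0, 0, 0, 1⟩

/-- The 2-sphere of quaternionic imaginary units. -/
def sph : Set ℍ[ℝ] := {x | x ^ 2 = -1}

/-- The real scalar product `⟨x, y⟩ = Re (x * ȳ)` on `ℍ`. -/
def qip (x y : ℍ[ℝ]) : ℝ := (x * star y).re

/-- `‖Λ‖²`, the squared norm of a real linear map `Λ : ℍ → ℍ`. -/
def normSqL (Λ : ℍ[ℝ] →ₗ[ℝ] ℍ[ℝ]) : ℝ :=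
  (1 / 4) * (normSq (Λ 1) + normSq (Λ qi) + normSq (Λ qj) + normSq (Λ qk))

/-- The bilinear expression `A_Λ(p, q) = ⟨R_p ∘ Λ, Λ ∘ L_q⟩`. -/
def Aform (Λ : ℍ[ℝ] →ₗ[ℝ] ℍ[ℝ]) (p q : ℍ[ℝ]) : ℝ :=
  (1 / 4) * (qip (Λ 1 * p) (Λ (q * 1)) + qip (Λ qi * p) (Λ (q * qi))
    + qip (Λ qj * p) (Λ (q * qj)) + qip (Λ qk * p) (Λ (q * qk)))

/-- The trace of the bilinear form `A_Λ` on `Im ℍ`. -/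
def trA (Λ : ℍ[ℝ] →ₗ[ℝ] ℍ[ℝ]) : ℝ := Aform Λ qi qi + Aform Λ qj qj + Aform Λ qk qk

/-- The bilinear form `M_Λ(p,q) = (1/2) tr(A_Λ) ⟨p,q⟩ - (1/2) A_Λ(p,q)`. -/
def Mform (Λ : ℍ[ℝ] →ₗ[ℝ] ℍ[ℝ]) (p q : ℍ[ℝ]) : ℝ :=
  (1 / 2) * trA Λ * qip p q - (1 / 2) * Aform Λ p q

/-- `Λ` is complex linear of type `(g, h)` if `Λ(g x) = Λ(x) h` for all `x`. -/
def IsCLType (Λ : ℍ[ℝ] →ₗ[ℝ] ℍ[ℝ]) (g h : ℍ[ℝ]) : Prop := ∀ x, Λ (g * x) = Λ x * h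

/-- `Λ` is regular (right Fueter-regular). -/
def IsReg (Λ : ℍ[ℝ] →ₗ[ℝ] ℍ[ℝ]) : Prop :=
  Λ 1 * 1 + Λ qi * qi + Λ qj * qj + Λ qk * qk = 0

/-- The antiautomorphism-type map `θ̄_p(x) = p x̄ p⁻¹` as a real linear map. -/
def thetaBar (p : ℍ[ℝ]) : ℍ[ℝ] →ₗ[ℝ] ℍ[ℝ] where
  toFun x := p * star x * p⁻¹
  map_add' x y := by simp [star_add, mul_add, add_mul]
  map_smul' r x := by simp [mul_smul_comm, smul_mul_assoc]

/-- Left multiplication by a quaternion, as a real linear map. -/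
def lmul (a : ℍ[ℝ]) : ℍ[ℝ] →ₗ[ℝ] ℍ[ℝ] := LinearMap.mulLeft ℝ a

/-- The size `s(Λ)` of a (regular) real linear map: the minimal number of nonzero
coefficients `λ₁, λ₂, λ₃` in a decomposition `Λ = λ₁ θ̄_{e₁} + λ₂ θ̄_{e₂} + λ₃ θ̄_{e₃}`,
over all triples of pairwise orthogonal imaginary units `e₁, e₂, e₃`. -/
def qsize (Λ : ℍ[ℝ] →ₗ[ℝ] ℍ[ℝ]) : ℕ :=
  sInf { n | ∃ e₁ e₂ e₃ l₁ l₂ l₃ : ℍ[ℝ],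
    e₁ ∈ sph ∧ e₂ ∈ sph ∧ e₃ ∈ sph ∧
    qip e₁ e₂ = 0 ∧ qip e₁ e₃ = 0 ∧ qip e₂ e₃ = 0 ∧
    Λ = (lmul l₁).comp (thetaBar e₁) + (lmul l₂).comp (thetaBar e₂)
        + (lmul l₃).comp (thetaBar e₃) ∧
    n = (if l₁ = 0 then 0 else 1) + (if l₂ = 0 then 0 else 1) + (if l₃ = 0 then 0 else 1) }

/-- The 3×3 matrix of `M_Λ` with respect to the basis `(i, j, k)` of `Im ℍ`. -/
def Mmat (Λ : ℍ[ℝ] →ₗ[ℝ] ℍ[ℝ]) : Matrix (Fin 3) (Fin 3) ℝ :=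
  Matrix.of fun α β => Mform Λ (![qi, qj, qk] α) (![qi, qj, qk] β)

/-- The basis `(1, i, j, k)` of `ℍ` over `ℝ`. -/
def qBasis : Module.Basis (Fin 4) ℝ ℍ[ℝ] := QuaternionAlgebra.basisOneIJK (-1) 0 (-1)

/-- The adjugate `Λ^adjg` of a real linear map `Λ : ℍ → ℍ`: the linear map whose matrix
with respect to the basis `(1, i, j, k)` is the adjugate of the matrix of `Λ`. -/
def adjg (Λ : ℍ[ℝ] →ₗ[ℝ] ℍ[ℝ]) : ℍ[ℝ] →ₗ[ℝ] ℍ[ℝ] :=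
  Matrix.toLin qBasis qBasis (Matrix.adjugate (LinearMap.toMatrix qBasis qBasis Λ))

/-- The embedding `ℂ → ℍ`, `x + √-1 y ↦ x + y i`. -/
def iotaC (z : ℂ) : ℍ[ℝ] := ⟨z.re, z.im, 0, 0⟩

/-- The map `L_Λ : Im ℍ → Im ℍ` representing `A_Λ`: `⟨p, L_Λ(q)⟩ = A_Λ(p, q)`. -/
def LLam (Λ : ℍ[ℝ] →ₗ[ℝ] ℍ[ℝ]) (q : ℍ[ℝ]) : ℍ[ℝ] :=
  Aform Λ qi q • qi + Aform Λ qj q • qj + Aform Λ qk q • qk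

/-- The quadratic form `Q_Λ(q) = |L_Λ(q)|²`. -/
def QLam (Λ : ℍ[ℝ] →ₗ[ℝ] ℍ[ℝ]) (q : ℍ[ℝ]) : ℝ := normSq (LLam Λ q)

/-! For unit quaternions `g` and `h`, expanding the squares gives
`∑ₑ |Λ(g e) - Λ(e) h|² = 8 ‖Λ‖² - 8 A_Λ(h, g)` over the basis `e ∈ {1, i, j, k}`, because
left multiplication by `g` and right multiplication by `h` are isometries. Hence
`A_Λ(h, g) ≤ ‖Λ‖²`, with equality exactly when `Λ` is complex linear of type `(g, h)`.
Since `A_Λ(h, g) = ⟨h, L_Λ(g)⟩`, choosing `h` in the direction of `L_Λ(g)` gives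
`|L_Λ(g)| ≤ ‖Λ‖²`, and equality produces the unit `h = L_Λ(g) / ‖Λ‖²`. -/

@[simp] lemma qi_re : qi.re = 0 := rfl
@[simp] lemma qi_imI : qi.imI = 1 := rfl
@[simp] lemma qi_imJ : qi.imJ = 0 := rfl
@[simp] lemma qi_imK : qi.imK = 0 := rfl
@[simp] lemma qj_re : qj.re = 0 := rfl
@[simp] lemma qj_imI : qj.imI = 0 := rfl
@[simp] lemma qj_imJ : qj.imJ = 1 := rfl
@[simp] lemma qj_imK : qj.imK = 0 := rfl
@[simp] lemma qk_re : qk.re = 0 := rfl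
@[simp] lemma qk_imI : qk.imI = 0 := rfl
@[simp] lemma qk_imJ : qk.imJ = 0 := rfl
@[simp] lemma qk_imK : qk.imK = 1 := rfl

lemma qip_def' (x y : ℍ[ℝ]) :
    qip x y = x.re * y.re + x.imI * y.imI + x.imJ * y.imJ + x.imK * y.imK := by
  simp [qip, Quaternion.re_mul]

lemma qip_comm (x y : ℍ[ℝ]) : qip x y = qip y x := by
  simp only [qip_def']
  ring

lemma qip_self (x : ℍ[ℝ]) : qip x x = normSq x := by
  rw [qip_def', normSq_def']
  ring

lemma qip_smul_left (r : ℝ) (x y : ℍ[ℝ]) : qip (r • x) y = r * qip x y := by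
  simp only [qip_def', re_smul, imI_smul, imJ_smul, imK_smul, smul_eq_mul]
  ring

lemma qip_mul_left_mul_left (a p q : ℍ[ℝ]) : qip (a * p) (a * q) = normSq a * qip p q := by
  simp only [qip_def', re_mul, imI_mul, imJ_mul, imK_mul, normSq_def']
  ring

lemma normSq_sub_eq (x y : ℍ[ℝ]) : normSq (x - y) = normSq x + normSq y - 2 * qip x y := by
  rw [sub_eq_add_neg, normSq_add, normSq_neg, qip, star_neg, mul_neg, re_neg]
  ring

lemma mem_sph_iff {x : ℍ[ℝ]} : x ∈ sph ↔ x.re = 0 ∧ normSq x = 1 := by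
  constructor
  · intro hx
    have hx' : x ^ 2 = -1 := hx
    have h1 : normSq x = 1 := by
      have : normSq x ^ 2 = 1 := by rw [← map_pow, hx', normSq_neg, map_one]
      exact (pow_eq_one_iff_of_nonneg normSq_nonneg two_ne_zero).1 this
    refine ⟨sq_eq_neg_normSq.1 ?_, h1⟩
    rw [hx', h1, coe_one]
  · rintro ⟨h0, h1⟩
    show x ^ 2 = -1
    rw [sq_eq_neg_normSq.2 h0, h1, coe_one]

lemma eq_sum_coords (x : ℍ[ℝ]) :
    x = x.re • (1 : ℍ[ℝ]) + x.imI • qi + x.imJ • qj + x.imK • qk := by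
  ext <;> simp

lemma ext_one_qi_qj_qk {M : Type*} [AddCommGroup M] [Module ℝ M] {f f' : ℍ[ℝ] →ₗ[ℝ] M}
    (h1 : f 1 = f' 1) (hi : f qi = f' qi) (hj : f qj = f' qj) (hk : f qk = f' qk) : f = f' :=
  LinearMap.ext fun x => by rw [eq_sum_coords x]; simp [h1, hi, hj, hk]

lemma normSqL_pos {Λ : ℍ[ℝ] →ₗ[ℝ] ℍ[ℝ]} (hΛ : Λ ≠ 0) : 0 < normSqL Λ := by
  by_contra hle
  apply hΛ
  have := normSq_nonneg (a := Λ 1)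
  have := normSq_nonneg (a := Λ qi)
  have := normSq_nonneg (a := Λ qj)
  have := normSq_nonneg (a := Λ qk)
  unfold normSqL at hle
  refine ext_one_qi_qj_qk ?_ ?_ ?_ ?_ <;>
    rw [LinearMap.zero_apply, ← normSq_le_zero] <;> linarith

lemma normSqL_comp_lmul (Λ : ℍ[ℝ] →ₗ[ℝ] ℍ[ℝ]) (g : ℍ[ℝ]) :
    normSqL (Λ ∘ₗ lmul g) = normSq g * normSqL Λ := by
  have hΛ : ∀ x, Λ x = x.re • Λ 1 + x.imI • Λ qi + x.imJ • Λ qj + x.imK • Λ qk := fun x => by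
    conv_lhs => rw [eq_sum_coords x]
    simp
  simp only [normSqL, LinearMap.comp_apply, lmul, LinearMap.mulLeft_apply, hΛ (g * _)]
  simp only [normSq_def', re_mul, imI_mul, imJ_mul, imK_mul, re_add, imI_add, imJ_add, imK_add,
    re_smul, imI_smul, imJ_smul, imK_smul, smul_eq_mul, qi_re, qi_imI, qi_imJ, qi_imK, qj_re,
    qj_imI, qj_imJ, qj_imK, qk_re, qk_imI, qk_imJ, qk_imK, re_one, imI_one, imJ_one, imK_one]
  ring

section Defect

variable (Λ : ℍ[ℝ] →ₗ[ℝ] ℍ[ℝ]) (g h : ℍ[ℝ])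

lemma sum_normSq_sub_mul_right :
    normSq (Λ (g * 1) - Λ 1 * h) + normSq (Λ (g * qi) - Λ qi * h)
      + normSq (Λ (g * qj) - Λ qj * h) + normSq (Λ (g * qk) - Λ qk * h)
      = 4 * (normSq g + normSq h) * normSqL Λ - 8 * Aform Λ h g := by
  have hg := normSqL_comp_lmul Λ g
  simp only [normSqL, LinearMap.comp_apply, lmul, LinearMap.mulLeft_apply] at hg
  simp only [normSq_sub_eq, map_mul, qip_comm (Λ (g * _))]
  unfold Aform normSqL
  linear_combination 4 * hg

variable {Λ g h}

lemma Aform_le_normSqL (hg : normSq g = 1) (hh : normSq h = 1) : Aform Λ h g ≤ normSqL Λ := by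
  have := sum_normSq_sub_mul_right Λ g h
  rw [hg, hh] at this
  linarith [normSq_nonneg (a := Λ (g * 1) - Λ 1 * h), normSq_nonneg (a := Λ (g * qi) - Λ qi * h),
    normSq_nonneg (a := Λ (g * qj) - Λ qj * h), normSq_nonneg (a := Λ (g * qk) - Λ qk * h)]

lemma isCLType_iff_Aform_eq (hg : normSq g = 1) (hh : normSq h = 1) :
    IsCLType Λ g h ↔ Aform Λ h g = normSqL Λ := by
  have hsum := sum_normSq_sub_mul_right Λ g h
  rw [hg, hh] at hsum
  constructor
  · intro hcl
    rw [hcl 1, hcl qi, hcl qj, hcl qk] at hsum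
    simp only [sub_self, map_zero] at hsum
    linarith
  · intro hA
    have := normSq_nonneg (a := Λ (g * 1) - Λ 1 * h)
    have := normSq_nonneg (a := Λ (g * qi) - Λ qi * h)
    have := normSq_nonneg (a := Λ (g * qj) - Λ qj * h)
    have := normSq_nonneg (a := Λ (g * qk) - Λ qk * h)
    have hext : Λ ∘ₗ lmul g = LinearMap.mulRight ℝ h ∘ₗ Λ := by
      refine ext_one_qi_qj_qk ?_ ?_ ?_ ?_ <;>
        simp only [LinearMap.comp_apply, lmul, LinearMap.mulLeft_apply,
          LinearMap.mulRight_apply] <;>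
        rw [← sub_eq_zero, ← normSq_le_zero] <;> linarith
    exact fun x => LinearMap.congr_fun hext x

end Defect

lemma LLam_re (Λ : ℍ[ℝ] →ₗ[ℝ] ℍ[ℝ]) (q : ℍ[ℝ]) : (LLam Λ q).re = 0 := by
  simp [LLam]

lemma qip_LLam (Λ : ℍ[ℝ] →ₗ[ℝ] ℍ[ℝ]) {p : ℍ[ℝ]} (hp : p.re = 0) (q : ℍ[ℝ]) :
    qip p (LLam Λ q) = Aform Λ p q := by
  simp only [LLam, Aform, qip_def', re_add, imI_add, imJ_add, imK_add, re_smul, imI_smul,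
    imJ_smul, imK_smul, re_mul, imI_mul, imJ_mul, imK_mul, smul_eq_mul, qi_re, qi_imI, qi_imJ,
    qi_imK, qj_re, qj_imI, qj_imJ, qj_imK, qk_re, qk_imI, qk_imJ, qk_imK, hp]
  ring

lemma normSq_le_sq_of_forall_qip_le {L : ℍ[ℝ]} {c : ℝ} (hL : L.re = 0)
    (hc : ∀ u ∈ sph, qip u L ≤ c) : normSq L ≤ c ^ 2 := by
  rcases eq_or_ne L 0 with rfl | hL0
  · simpa using sq_nonneg c
  have hn : 0 < ‖L‖ := norm_pos_iff.2 hL0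
  have hsq : normSq L = ‖L‖ ^ 2 := by rw [normSq_eq_norm_mul_self, sq]
  have hu : ‖L‖⁻¹ • L ∈ sph := by
    refine mem_sph_iff.2 ⟨by simp [hL], ?_⟩
    rw [normSq_smul, hsq]
    field_simp
  have hle := hc _ hu
  rw [qip_smul_left, qip_self, hsq] at hle
  have : ‖L‖ ≤ c := by
    calc ‖L‖ = ‖L‖⁻¹ * ‖L‖ ^ 2 := by field_simp
      _ ≤ c := hle
  rw [hsq]
  exact pow_le_pow_left₀ hn.le this 2

lemma QLam_le (Λ : ℍ[ℝ] →ₗ[ℝ] ℍ[ℝ]) {g : ℍ[ℝ]} (hg : normSq g = 1) :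
    QLam Λ g ≤ normSqL Λ ^ 2 :=
  normSq_le_sq_of_forall_qip_le (LLam_re Λ g) fun u hu => by
    rw [qip_LLam Λ (mem_sph_iff.1 hu).1]
    exact Aform_le_normSqL hg (mem_sph_iff.1 hu).2

lemma exists_isCLType_of_QLam_eq {Λ : ℍ[ℝ] →ₗ[ℝ] ℍ[ℝ]} {g : ℍ[ℝ]} (hN : 0 < normSqL Λ)
    (hg : normSq g = 1) (hQ : QLam Λ g = normSqL Λ ^ 2) : ∃ h ∈ sph, IsCLType Λ g h := by
  have hQ' : normSq (LLam Λ g) = normSqL Λ ^ 2 := hQ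
  have hre : ((normSqL Λ)⁻¹ • LLam Λ g).re = 0 := by simp [LLam_re]
  have hnorm : normSq ((normSqL Λ)⁻¹ • LLam Λ g) = 1 := by
    rw [normSq_smul, hQ']
    field_simp
  refine ⟨(normSqL Λ)⁻¹ • LLam Λ g, mem_sph_iff.2 ⟨hre, hnorm⟩,
    (isCLType_iff_Aform_eq hg hnorm).2 ?_⟩
  rw [← qip_LLam Λ hre, qip_smul_left, qip_self, hQ']
  field_simp

lemma LLam_eq_smul_of_isCLType {Λ : ℍ[ℝ] →ₗ[ℝ] ℍ[ℝ]} {g h : ℍ[ℝ]} (hh : h.re = 0)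
    (hcl : IsCLType Λ g h) : LLam Λ g = normSqL Λ • h := by
  have hA : ∀ p, Aform Λ p g = normSqL Λ * qip p h := fun p => by
    rw [Aform, normSqL, hcl 1, hcl qi, hcl qj, hcl qk, qip_mul_left_mul_left,
      qip_mul_left_mul_left, qip_mul_left_mul_left, qip_mul_left_mul_left]
    ring
  ext <;> simp [LLam, hA, qip_def', hh]

/-- For a nonzero real linear map `Λ : ℍ → ℍ` and `g ∈ 𝕊`: `Q_Λ(g) ≤ ‖Λ‖⁴`, with equality
iff `Λ` is complex linear of type `(g,h)` for some `h ∈ 𝕊`; moreover if `Λ` is complex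
linear of type `(g,h)` then `L_Λ(g) = ‖Λ‖² h`, so such an `h` is unique. -/
theorem stmt1 (Λ : ℍ[ℝ] →ₗ[ℝ] ℍ[ℝ]) (hΛ : Λ ≠ 0) (g : ℍ[ℝ]) (hg : g ∈ sph) :
    QLam Λ g ≤ normSqL Λ ^ 2 ∧
    (QLam Λ g = normSqL Λ ^ 2 ↔ ∃ h ∈ sph, IsCLType Λ g h) ∧
    (∀ h ∈ sph, IsCLType Λ g h → LLam Λ g = normSqL Λ • h) ∧
    (∀ h ∈ sph, ∀ h' ∈ sph, IsCLType Λ g h → IsCLType Λ g h' → h = h') := by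
  have hg1 := (mem_sph_iff.1 hg).2
  have hN := normSqL_pos hΛ
  have hL : ∀ h ∈ sph, IsCLType Λ g h → LLam Λ g = normSqL Λ • h := fun h hh hcl =>
    LLam_eq_smul_of_isCLType (mem_sph_iff.1 hh).1 hcl
  refine ⟨QLam_le Λ hg1, ⟨exists_isCLType_of_QLam_eq hN hg1, ?_⟩, hL, ?_⟩
  · rintro ⟨h, hh, hcl⟩
    rw [QLam, hL h hh hcl, normSq_smul, (mem_sph_iff.1 hh).2, mul_one]
  · intro h hh h' hh' hcl hcl'
    exact smul_right_injective _ hN.ne' ((hL h hh hcl).symm.trans (hL h' hh' hcl'))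
end
end

section
/- If an ℝ-linear map Λ : ℍ → ℍ is complex linear of type (g,g) for some g ∈ 𝕊, then Λ is regular. -/
noncomputable section

open Quaternion Classical

def fueterSum (Λ : ℍ[ℝ] →ₗ[ℝ] ℍ[ℝ]) : ℍ[ℝ] := Λ 1 * 1 + Λ qi * qi + Λ qj * qj + Λ qk * qk

theorem linearMap_apply_eq_coord_sum (Λ : ℍ[ℝ] →ₗ[ℝ] ℍ[ℝ]) (x : ℍ[ℝ]) :
    Λ x = x.re • Λ 1 + x.imI • Λ qi + x.imJ • Λ qj + x.imK • Λ qk := by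
  have hx : x = x.re • (1 : ℍ[ℝ]) + x.imI • qi + x.imJ • qj + x.imK • qk := by
    ext <;> simp [Quaternion.re_smul] <;> simp [qi, qj, qk]
  conv_lhs => rw [hx]
  simp only [map_add, map_smul]

/-- `fueterSum Λ = Σ Λ(eₐ) eₐ` does not depend on the orthonormal basis `(eₐ)`, and `x ↦ g x` is
`|g|` times an orthogonal map; so evaluating on the basis `(g eₐ)` scales it by `|g|²`. -/
theorem fueterSum_mul_left (Λ : ℍ[ℝ] →ₗ[ℝ] ℍ[ℝ]) (g : ℍ[ℝ]) :
    Λ (g * 1) * (g * 1) + Λ (g * qi) * (g * qi) + Λ (g * qj) * (g * qj)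
      + Λ (g * qk) * (g * qk) = normSq g • fueterSum Λ := by
  rw [linearMap_apply_eq_coord_sum Λ (g * 1), linearMap_apply_eq_coord_sum Λ (g * qi),
    linearMap_apply_eq_coord_sum Λ (g * qj), linearMap_apply_eq_coord_sum Λ (g * qk), fueterSum]
  ext <;> simp [normSq_def', Quaternion.re_smul, Quaternion.re_mul, Quaternion.imI_mul,
    Quaternion.imJ_mul, Quaternion.imK_mul] <;> simp [qi, qj, qk] <;> ring

/-- If a real linear map `Λ : ℍ → ℍ` is complex linear of type `(g,g)` for some `g ∈ 𝕊`,
then `Λ` is regular. -/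
theorem stmt6 (Λ : ℍ[ℝ] →ₗ[ℝ] ℍ[ℝ]) (g : ℍ[ℝ]) (hg : g ∈ sph)
    (h : IsCLType Λ g g) : IsReg Λ := by
  have hg2 : g * g = -1 := by simpa [sph, sq] using hg
  have hsum : normSq g • fueterSum Λ = -fueterSum Λ := by
    rw [← fueterSum_mul_left]
    simp only [h _, fueterSum, mul_assoc, ← mul_assoc g g, hg2]
    noncomm_ring
  have hpos : normSq g + 1 ≠ 0 := (add_pos_of_nonneg_of_pos normSq_nonneg one_pos).ne'
  show fueterSum Λ = 0
  refine (smul_eq_zero.mp ?_).resolve_left hpos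
  rw [add_smul, one_smul, hsum, neg_add_cancel]

end
end

section
/- Let e₁ ∈ 𝕊, let λ₁ ∈ ℍ \ {0}, and let Λ := λ₁·θ̄_{e₁} (a regular ℝ-linear map of size 1). Then for all g, h ∈ 𝕊, Λ is complex linear of type (g,h) if and only if h = e₁·g·e₁ (which equals θ̄_{e₁}(g)). Moreover, e₁·g·e₁ = g if and only if ⟨g, e₁⟩ = 0. -/
noncomputable section

open Quaternion Classical

/-!
Writing `Λ x = λ₁ e₁ x̄ e₁⁻¹`, the identity `Λ (g x) = Λ x h` reads `e₁ x̄ ḡ e₁⁻¹ = e₁ x̄ e₁⁻¹ h`;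
at `x = 1` it forces `h = e₁ ḡ e₁⁻¹ = θ̄_{e₁}(g)`, and conversely this value of `h` makes it hold
for every `x`. For imaginary units `ḡ = -g` and `e₁⁻¹ = -e₁`, so `θ̄_{e₁}(g) = e₁ g e₁`. Finally
`e₁ g e₁ = g` says that `e₁` and `g` anticommute, and `e₁ g + g e₁ = -2 ⟨g, e₁⟩` for imaginary
quaternions.
-/

lemma re_eq_zero_of_mem_sph {x : ℍ[ℝ]} (hx : x ∈ sph) : x.re = 0 := by
  simp only [sph, Set.mem_ofPred_eq, sq, Quaternion.ext_iff] at hx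
  obtain ⟨hre, hi, hj, hk⟩ := hx
  simp only [re_mul, imI_mul, imJ_mul, imK_mul, re_neg, re_one, imI_neg, imI_one,
    imJ_neg, imJ_one, imK_neg, imK_one] at hre hi hj hk
  nlinarith [sq_nonneg x.re, sq_nonneg x.imI, sq_nonneg x.imJ, sq_nonneg x.imK]

lemma star_eq_neg_of_mem_sph {x : ℍ[ℝ]} (hx : x ∈ sph) : star x = -x :=
  star_eq_neg.mpr (re_eq_zero_of_mem_sph hx)

lemma mul_self_eq_neg_one_of_mem_sph {x : ℍ[ℝ]} (hx : x ∈ sph) : x * x = -1 := by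
  rw [← sq]; exact hx

lemma inv_eq_neg_of_mem_sph {x : ℍ[ℝ]} (hx : x ∈ sph) : x⁻¹ = -x :=
  inv_eq_of_mul_eq_one_right <| by rw [mul_neg, mul_self_eq_neg_one_of_mem_sph hx, neg_neg]

lemma thetaBar_apply (p x : ℍ[ℝ]) : thetaBar p x = p * star x * p⁻¹ := rfl

lemma thetaBar_eq_mul_mul_of_mem_sph {e g : ℍ[ℝ]} (he : e ∈ sph) (hg : g ∈ sph) :
    thetaBar e g = e * g * e := by
  rw [thetaBar_apply, star_eq_neg_of_mem_sph hg, inv_eq_neg_of_mem_sph he]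
  noncomm_ring

lemma isCLType_lmul_comp_thetaBar_iff {l e : ℍ[ℝ]} (hl : l ≠ 0) (he : e ≠ 0) (g h : ℍ[ℝ]) :
    IsCLType ((lmul l).comp (thetaBar e)) g h ↔ h = thetaBar e g := by
  have happly (x : ℍ[ℝ]) : (lmul l).comp (thetaBar e) x = l * (e * star x * e⁻¹) := rfl
  simp only [IsCLType, happly, thetaBar_apply]
  constructor
  · intro H
    have h1 := H 1
    rw [mul_one, star_one, mul_one, mul_inv_cancel₀ he, mul_one] at h1
    exact (mul_left_cancel₀ hl h1).symm
  · rintro rfl x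
    rw [star_mul]
    simp only [mul_assoc, inv_mul_cancel_left₀ he]

lemma mul_add_mul_eq_neg_two_qip {a b : ℍ[ℝ]} (ha : a.re = 0) (hb : b.re = 0) :
    a * b + b * a = ((-2 * qip a b : ℝ) : ℍ[ℝ]) := by
  have hstar : star (a * b) = b * a := by
    rw [star_mul, star_eq_neg.mpr ha, star_eq_neg.mpr hb, neg_mul_neg]
  rw [← hstar, self_add_star', qip, star_eq_neg.mpr hb, mul_neg, re_neg]
  ring_nf

lemma mul_mul_eq_self_iff_qip_eq_zero {e g : ℍ[ℝ]} (he : e ∈ sph) (hg : g ∈ sph) :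
    e * g * e = g ↔ qip g e = 0 := by
  have hee := mul_self_eq_neg_one_of_mem_sph he
  have hsum := mul_add_mul_eq_neg_two_qip (re_eq_zero_of_mem_sph hg) (re_eq_zero_of_mem_sph he)
  have hanti : e * g * e = g ↔ g * e + e * g = 0 := by
    constructor
    · intro H
      calc g * e + e * g = e * g * e * e + e * g := by rw [H]
        _ = 0 := by rw [mul_assoc (e * g), hee]; noncomm_ring
    · intro H
      calc e * g * e = -(g * e) * e := by rw [eq_neg_of_add_eq_zero_right H]
        _ = g := by rw [neg_mul, mul_assoc, hee]; noncomm_ring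
  rw [hanti, hsum, ← coe_zero, coe_inj]
  constructor <;> intro H <;> linarith

/-- A regular real linear map `Λ = λ₁ θ̄_{e₁}` of size `1`: for `g, h ∈ 𝕊`, `Λ` is complex
linear of type `(g,h)` iff `h = e₁ g e₁ = θ̄_{e₁}(g)`; and `e₁ g e₁ = g` iff `g ⊥ e₁`. -/
theorem stmt11 (e₁ : ℍ[ℝ]) (he : e₁ ∈ sph) (l₁ : ℍ[ℝ]) (hl : l₁ ≠ 0)
    (Λ : ℍ[ℝ] →ₗ[ℝ] ℍ[ℝ]) (hΛ : Λ = (lmul l₁).comp (thetaBar e₁)) :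
    ∀ g ∈ sph, ∀ h ∈ sph,
      (IsCLType Λ g h ↔ h = e₁ * g * e₁) ∧ thetaBar e₁ g = e₁ * g * e₁ ∧
      (e₁ * g * e₁ = g ↔ qip g e₁ = 0) := by
  intro g hg h _
  have he₀ : e₁ ≠ 0 := by rintro rfl; simp [sph] at he
  have hθ := thetaBar_eq_mul_mul_of_mem_sph he hg
  refine ⟨?_, hθ, mul_mul_eq_self_iff_qip_eq_zero he hg⟩
  rw [hΛ, isCLType_lmul_comp_thetaBar_iff hl he₀, hθ]

end
end
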